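/- arXiv:2409.03681 — 4 statements merged into one kernel-verified Lean document; each statement's English description precedes it below -/
import Mathlib

section
/- Let x* ∈ ℤ_{≥0}^n be the lexicographically minimal optimal solution to min{cᵀx : Ax = b, x ∈ ℤ_{≥0}^n}. Let x' ∈ {0,1}^n be the indicator vector of supp(x*) and b' = Ax'. Then x' is an optimal solution to min{cᵀx : Ax = b', x ∈ ℤ_{≥0}^n}; that is, for every y ∈ ℤ_{≥0}^n with Ay = b' we have cᵀx' ≤ cᵀy. -/
open Matrix

/-- Lexicographic strict order on integer vectors. -/
def lexLt {n : ℕ} (x y : Fin n → ℤ) : Prop :=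
  ∃ i : Fin n, (∀ j, j < i → x j = y j) ∧ x i < y i

theorem stmt_0 {m n : ℕ} (A : Matrix (Fin m) (Fin n) ℤ) (b : Fin m → ℤ) (c : Fin n → ℤ)
    (xs : Fin n → ℤ) (hxs_nonneg : ∀ i, 0 ≤ xs i) (hxs_feas : A.mulVec xs = b)
    (hxs_opt : ∀ y : Fin n → ℤ, (∀ i, 0 ≤ y i) → A.mulVec y = b → c ⬝ᵥ xs ≤ c ⬝ᵥ y)
    (hxs_lexmin : ∀ y : Fin n → ℤ, (∀ i, 0 ≤ y i) → A.mulVec y = b →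
      c ⬝ᵥ y = c ⬝ᵥ xs → ¬ lexLt y xs)
    (x' : Fin n → ℤ) (hx' : ∀ i, x' i = if xs i ≠ 0 then 1 else 0)
    (b' : Fin m → ℤ) (hb' : b' = A.mulVec x') :
    ∀ y : Fin n → ℤ, (∀ i, 0 ≤ y i) → A.mulVec y = b' → c ⬝ᵥ x' ≤ c ⬝ᵥ y := by
  intro y hy hAy
  set z : Fin n → ℤ := fun i => xs i - x' i + y i with hz
  have hznn : ∀ i, 0 ≤ z i := by
    intro i
    have := hy i
    by_cases h : xs i = 0
    · simp [hz, hx' i, h]; linarith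
    · have h1 : 1 ≤ xs i := by
        have := hxs_nonneg i; omega
      simp only [hz, hx' i, if_pos h]
      linarith
  have hzfeas : A.mulVec z = b := by
    have : z = xs - x' + y := by
      funext i; simp [hz, Pi.add_apply, Pi.sub_apply]
    rw [this, mulVec_add, mulVec_sub, hxs_feas, hAy, hb']
    abel
  have hopt := hxs_opt z hznn hzfeas
  have hcz : c ⬝ᵥ z = c ⬝ᵥ xs - c ⬝ᵥ x' + c ⬝ᵥ y := by
    have : z = xs - x' + y := by
      funext i; simp [hz, Pi.add_apply, Pi.sub_apply]
    rw [this, dotProduct_add, dotProduct_sub]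
  linarith [hopt, hcz.le, hcz.ge]
end

section
/- Let x* ∈ ℤ_{≥0}^n be the lexicographically minimal optimal solution to min{cᵀx : Ax = b, x ∈ ℤ_{≥0}^n}, let x' be the indicator vector of supp(x*) and b' = Ax'. Then x' is the lexicographically minimal optimal solution to min{cᵀx : Ax = b', x ∈ ℤ_{≥0}^n}, that is, there is no y ∈ ℤ_{≥0}^n with Ay = b', cᵀy ≤ cᵀx', and (cᵀy < cᵀx' or y ≺_lex x'). -/
open Matrix

theorem stmt_1 {m n : ℕ} (A : Matrix (Fin m) (Fin n) ℤ) (b : Fin m → ℤ) (c : Fin n → ℤ)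
    (xs : Fin n → ℤ) (hxs_nonneg : ∀ i, 0 ≤ xs i) (hxs_feas : A.mulVec xs = b)
    (hxs_opt : ∀ y : Fin n → ℤ, (∀ i, 0 ≤ y i) → A.mulVec y = b → c ⬝ᵥ xs ≤ c ⬝ᵥ y)
    (hxs_lexmin : ∀ y : Fin n → ℤ, (∀ i, 0 ≤ y i) → A.mulVec y = b →
      c ⬝ᵥ y = c ⬝ᵥ xs → ¬ lexLt y xs)
    (x' : Fin n → ℤ) (hx' : ∀ i, x' i = if xs i ≠ 0 then 1 else 0)
    (b' : Fin m → ℤ) (hb' : b' = A.mulVec x') :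
    ¬ ∃ y : Fin n → ℤ, (∀ i, 0 ≤ y i) ∧ A.mulVec y = b' ∧ c ⬝ᵥ y ≤ c ⬝ᵥ x' ∧
      (c ⬝ᵥ y < c ⬝ᵥ x' ∨ lexLt y x') := by
  rintro ⟨y, hy_nonneg, hy_feas, hy_le, hy_better⟩
  have hx'le : ∀ i, x' i ≤ xs i := by
    intro i
    have := hxs_nonneg i
    rw [hx' i]
    by_cases h : xs i = 0 <;> simp [h] <;> omega
  set z : Fin n → ℤ := xs - x' + y with hz
  have hz_nonneg : ∀ i, 0 ≤ z i := by
    intro i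
    have := hx'le i; have := hy_nonneg i
    simp [hz, Pi.add_apply, Pi.sub_apply]; omega
  have hz_feas : A.mulVec z = b := by
    rw [hz, Matrix.mulVec_add, Matrix.mulVec_sub, hxs_feas, hy_feas, hb']
    ring
  have hcz : c ⬝ᵥ z = c ⬝ᵥ xs - c ⬝ᵥ x' + c ⬝ᵥ y := by
    rw [hz, dotProduct_add, dotProduct_sub]
  have hopt := hxs_opt z hz_nonneg hz_feas
  have hcy : c ⬝ᵥ y = c ⬝ᵥ x' := by omega
  have hceq : c ⬝ᵥ z = c ⬝ᵥ xs := by omega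
  rcases hy_better with h | ⟨i, hpre, hlt⟩
  · omega
  · exact hxs_lexmin z hz_nonneg hz_feas hceq
      ⟨i, fun j hj => by simp [hz, Pi.add_apply, Pi.sub_apply, hpre j hj],
        by simp [hz, Pi.add_apply, Pi.sub_apply]; omega⟩
end

section
/- Let x* be the lexicographically minimal optimal solution to min{cᵀx : Ax = b, x ∈ ℤ_{≥0}^n}, and write x* = x*_ℓ + x*_r with x*_ℓ, x*_r ∈ ℤ_{≥0}^n. Set b_ℓ := A x*_ℓ. Then x*_ℓ is an optimal solution to min{cᵀx : Ax = b_ℓ, x ∈ ℤ_{≥0}^n} and x*_r is an optimal solution to min{cᵀx : Ax = b − b_ℓ, x ∈ ℤ_{≥0}^n}. -/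
open Matrix

theorem stmt_5 {m n : ℕ} (A : Matrix (Fin m) (Fin n) ℤ) (b : Fin m → ℤ) (c : Fin n → ℤ)
    (xs xl xr : Fin n → ℤ)
    (hxl_nonneg : ∀ i, 0 ≤ xl i) (hxr_nonneg : ∀ i, 0 ≤ xr i)
    (hsplit : xs = xl + xr)
    (hxs_nonneg : ∀ i, 0 ≤ xs i) (hxs_feas : A.mulVec xs = b)
    (hxs_opt : ∀ y : Fin n → ℤ, (∀ i, 0 ≤ y i) → A.mulVec y = b → c ⬝ᵥ xs ≤ c ⬝ᵥ y)
    (hxs_lexmin : ∀ y : Fin n → ℤ, (∀ i, 0 ≤ y i) → A.mulVec y = b →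
      c ⬝ᵥ y = c ⬝ᵥ xs → ¬ lexLt y xs)
    (bl : Fin m → ℤ) (hbl : bl = A.mulVec xl) :
    (∀ y : Fin n → ℤ, (∀ i, 0 ≤ y i) → A.mulVec y = bl → c ⬝ᵥ xl ≤ c ⬝ᵥ y) ∧
      (∀ y : Fin n → ℤ, (∀ i, 0 ≤ y i) → A.mulVec y = b - bl → c ⬝ᵥ xr ≤ c ⬝ᵥ y) := by
  have hsum : A.mulVec xs = A.mulVec xl + A.mulVec xr := by
    rw [hsplit, Matrix.mulVec_add]
  have hcsum : c ⬝ᵥ xs = c ⬝ᵥ xl + c ⬝ᵥ xr := by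
    rw [hsplit, dotProduct_add]
  constructor
  · intro y hy hfeas
    have hfy : A.mulVec (y + xr) = b := by
      rw [Matrix.mulVec_add, hfeas, hbl, ← hxs_feas, hsum]
    have := hxs_opt (y + xr) (fun i => add_nonneg (hy i) (hxr_nonneg i)) hfy
    rw [dotProduct_add, hcsum] at this
    linarith
  · intro y hy hfeas
    have hfy : A.mulVec (xl + y) = b := by
      rw [Matrix.mulVec_add, hfeas, ← hbl]
      ring
    have := hxs_opt (xl + y) (fun i => add_nonneg (hxl_nonneg i) (hy i)) hfy
    rw [dotProduct_add, hcsum] at this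
    linarith
end

section
/- Let x* be the lexicographically minimal optimal solution for right-hand side b, and x* = x*_ℓ + x*_r with supp(x*_ℓ) and supp(x*_r) disjoint, where supp(x*_ℓ) consists of the first half of the support indices (all indices in supp(x*_ℓ) are smaller than all indices in supp(x*_r)). Let b_ℓ = Ax*_ℓ. If y_ℓ is an optimal solution for right-hand side b_ℓ with y_ℓ ≺_lex x*_ℓ and cᵀy_ℓ = cᵀx*_ℓ, then y_ℓ + x*_r is an optimal solution for b that is lexicographically smaller than x*, contradicting minimality. Hence x*_ℓ is the lexicographically minimal optimal solution for b_ℓ. -/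
open Matrix Finset

theorem stmt_6 {m n : ℕ} (A : Matrix (Fin m) (Fin n) ℤ) (b : Fin m → ℤ) (c : Fin n → ℤ)
    (xs xl xr : Fin n → ℤ)
    (hxl_nonneg : ∀ i, 0 ≤ xl i) (hxr_nonneg : ∀ i, 0 ≤ xr i)
    (hsplit : xs = xl + xr)
    (hfirst : ∀ i j : Fin n, xl i ≠ 0 → xr j ≠ 0 → i < j)
    (hxs_nonneg : ∀ i, 0 ≤ xs i) (hxs_feas : A.mulVec xs = b)
    (hxs_opt : ∀ y : Fin n → ℤ, (∀ i, 0 ≤ y i) → A.mulVec y = b → c ⬝ᵥ xs ≤ c ⬝ᵥ y)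
    (hxs_lexmin : ∀ y : Fin n → ℤ, (∀ i, 0 ≤ y i) → A.mulVec y = b →
      c ⬝ᵥ y = c ⬝ᵥ xs → ¬ lexLt y xs)
    (bl : Fin m → ℤ) (hbl : bl = A.mulVec xl) :
    (∀ y : Fin n → ℤ, (∀ i, 0 ≤ y i) → A.mulVec y = bl → c ⬝ᵥ xl ≤ c ⬝ᵥ y) ∧
      ¬ ∃ y : Fin n → ℤ, (∀ i, 0 ≤ y i) ∧ A.mulVec y = bl ∧ c ⬝ᵥ y = c ⬝ᵥ xl ∧
        lexLt y xl := by
  have key : ∀ y : Fin n → ℤ, (∀ i, 0 ≤ y i) → A.mulVec y = bl →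
      (∀ i, 0 ≤ (y + xr) i) ∧ A.mulVec (y + xr) = b := by
    intro y hy hfeas
    refine ⟨fun i => add_nonneg (hy i) (hxr_nonneg i), ?_⟩
    rw [Matrix.mulVec_add, hfeas, hbl, ← Matrix.mulVec_add, ← hsplit, hxs_feas]
  constructor
  · intro y hy hfeas
    obtain ⟨h1, h2⟩ := key y hy hfeas
    have := hxs_opt (y + xr) h1 h2
    rw [hsplit, dotProduct_add, dotProduct_add] at this
    linarith
  · rintro ⟨y, hy, hfeas, hcost, i, hpre, hlt⟩
    obtain ⟨h1, h2⟩ := key y hy hfeas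
    refine hxs_lexmin (y + xr) h1 h2 ?_ ⟨i, fun j hj => ?_, ?_⟩
    · rw [hsplit, dotProduct_add, dotProduct_add, hcost]
    · simp [hsplit, hpre j hj]
    · simp only [hsplit, Pi.add_apply]
      linarith
end
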